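/- Suppose R is a (92, 3, 91, 30)-relative difference set in G = ℤ_92 × ℤ_3 relative to {0} × ℤ_3, and let s_0, s_1, s_2 count the elements of R with second component 0, 1, 2 respectively. Then s_0^2 + s_1^2 + s_2^2 = 2821. -/

import Mathlib

/-!
Count the ordered pairs `(r₁, r₂) ∈ R × R` whose second components agree. Grouping them by that
common component gives `s₀² + s₁² + s₂²`. Grouping them instead by the difference `r₁ - r₂`, which
runs over `ℤ₉₂ × {0}`, gives `91` for the difference `0` and `30` for each of the other `91`
differences, so the count is `91 + 91 · 30 = 2821`.
-/

open Finset

section DiffCount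

variable {G : Type*} [AddGroup G] [DecidableEq G]

/-- The number of ways `g` arises as a difference `r₁ - r₂` of elements of `R`
(with `r₁ = r₂` allowed, so that `diffCount R 0 = #R`). -/
def diffCount (R : Finset G) (g : G) : ℕ :=
  #((R ×ˢ R).filter (fun q => q.1 - q.2 = g))

theorem diffCount_zero (R : Finset G) : diffCount R 0 = #R := by
  rw [diffCount, ← diag_card R]
  congr 1
  ext q
  simp only [mem_filter, mem_product, mem_diag, sub_eq_zero]
  constructor
  · rintro ⟨⟨h₁, -⟩, h⟩; exact ⟨h₁, h⟩
  · rintro ⟨h₁, h⟩; exact ⟨⟨h₁, h ▸ h₁⟩, h⟩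

theorem card_filter_product_eq_sum_sq {α β : Type*} [DecidableEq β] [Fintype β]
    (s : Finset α) (f : α → β) :
    #((s ×ˢ s).filter (fun q => f q.1 = f q.2)) = ∑ b, #(s.filter (f · = b)) ^ 2 := by
  rw [card_eq_sum_card_fiberwise (f := fun q => f q.1) (t := univ) fun _ _ => mem_univ _]
  refine sum_congr rfl fun b _ => ?_
  rw [sq, ← card_product, filter_filter, ← filter_product]
  congr 1
  apply filter_congr
  rintro q -
  constructor
  · rintro ⟨h, rfl⟩; exact ⟨rfl, h.symm⟩
  · rintro ⟨h₁, h₂⟩; exact ⟨h₁.trans h₂.symm, h₁⟩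

variable {H : Type*} [AddGroup H] [DecidableEq H] [Fintype G]

theorem sum_diffCount_ker (R : Finset G) (f : G →+ H) :
    ∑ g ∈ univ.filter (f · = 0), diffCount R g
      = #((R ×ˢ R).filter (fun q => f q.1 = f q.2)) := by
  have hf : ∀ q : G × G, f (q.1 - q.2) = 0 ↔ f q.1 = f q.2 := fun q => by
    rw [map_sub, sub_eq_zero]
  rw [card_eq_sum_card_fiberwise (f := fun q : G × G => q.1 - q.2)
    (t := univ.filter (f · = 0))
    fun q hq => mem_filter.2 ⟨mem_univ _, (hf q).2 (mem_filter.1 hq).2⟩]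
  refine sum_congr rfl fun g hg => ?_
  rw [diffCount, filter_filter]
  congr 1
  apply filter_congr
  rintro q -
  constructor
  · intro h
    refine ⟨(hf q).1 ?_, h⟩
    rw [h]
    exact (mem_filter.1 hg).2
  · exact fun h => h.2

theorem sum_sq_card_fiber_of_diffCount [Fintype H] (R : Finset G) (f : G →+ H) (lam : ℕ)
    (hlam : ∀ g, f g = 0 → g ≠ 0 → diffCount R g = lam) :
    ∑ h, #(R.filter (f · = h)) ^ 2 = #R + lam * (#(univ.filter (f · = 0)) - 1) := by
  have h0 : (0 : G) ∈ univ.filter (f · = 0) := by simp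
  rw [← card_filter_product_eq_sum_sq, ← sum_diffCount_ker, ← add_sum_erase _ _ h0,
    diffCount_zero, ← card_erase_of_mem h0, mul_comm, ← smul_eq_mul, ← sum_const]
  congr 1
  refine sum_congr rfl fun g hg => ?_
  obtain ⟨hg0, hg⟩ := mem_erase.1 hg
  exact hlam g (mem_filter.1 hg).2 hg0

theorem sum_sq_card_filter_snd_of_diffCount {A B : Type*} [AddGroup A] [AddGroup B]
    [Fintype A] [Fintype B] [DecidableEq A] [DecidableEq B] (R : Finset (A × B)) (lam : ℕ)
    (hlam : ∀ g : A × B, g.1 ≠ 0 → g.2 = 0 → diffCount R g = lam) :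
    ∑ b, #(R.filter (·.2 = b)) ^ 2 = #R + lam * (Fintype.card A - 1) := by
  have hker : #(univ.filter fun g : A × B => g.2 = 0) = Fintype.card A := by
    rw [show univ.filter (fun g : A × B => g.2 = 0) = univ ×ˢ {0} by ext ⟨a, b⟩; simp [eq_comm],
      card_product, card_univ, card_singleton, mul_one]
  rw [← hker]
  exact sum_sq_card_fiber_of_diffCount R (AddMonoidHom.snd A B) lam
    fun g hg hg0 => hlam g (fun h1 => hg0 (Prod.ext h1 hg)) hg

end DiffCount

theorem stmt_16_general (R : Finset (ZMod 92 × ZMod 3)) (hcard : R.card = 91)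
    (hout : ∀ g : ZMod 92 × ZMod 3, g.1 ≠ 0 →
      ((R ×ˢ R).filter (fun q => q.1 - q.2 = g)).card = 30) :
    (R.filter (fun x => x.2 = 0)).card ^ 2 + (R.filter (fun x => x.2 = 1)).card ^ 2 +
      (R.filter (fun x => x.2 = 2)).card ^ 2 = 2821 := by
  have key := sum_sq_card_filter_snd_of_diffCount R 30 fun g hg _ => hout g hg
  rw [hcard, ZMod.card] at key
  exact (Fin.sum_univ_three _).symm.trans key

theorem stmt_16 (R : Finset (ZMod 92 × ZMod 3)) (hcard : R.card = 91)
    (hout : ∀ g : ZMod 92 × ZMod 3, g.1 ≠ 0 →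
      ((R ×ˢ R).filter (fun q => q.1 - q.2 = g)).card = 30)
    (hin : ∀ g : ZMod 92 × ZMod 3, g.1 = 0 → g ≠ 0 →
      ((R ×ˢ R).filter (fun q => q.1 - q.2 = g)).card = 0) :
    (R.filter (fun x => x.2 = 0)).card ^ 2 + (R.filter (fun x => x.2 = 1)).card ^ 2 +
      (R.filter (fun x => x.2 = 2)).card ^ 2 = 2821 :=
  stmt_16_general R hcard hout
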